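/- Let S and U be real symmetric positive semidefinite n×n matrices with λmax(U) + λmax(S) > 0, let x ∈ ℝⁿ, and set ζ = λmin(S)/(λmax(U) + λmax(S))² and x⁺ = x − ζ(S + U)x. Then ‖x⁺‖² ≤ ( 1 − λmin(S)²/(λmax(U) + λmax(S))² )·‖x‖². -/

import Mathlib

/-!
In an orthonormal eigenbasis of `M = S + U` the step `x ↦ x - ζ M x` acts coordinatewise as
multiplication by `1 - ζ μᵢ`, where the eigenvalues `μᵢ` of `M` lie in
`[λmin(S), λmax(U) + λmax(S)]` by the Rayleigh-quotient bounds for `S` and `U`. Hence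
`t = ζ μᵢ ∈ [0, 1]`, and `(1 - t)² ≤ 1 - t ≤ 1 - ζ λmin(S) = 1 - λmin(S)² / (λmax(U) + λmax(S))²`.
-/

open Matrix
open scoped Classical

/-- The largest eigenvalue of a (Hermitian) real matrix. -/
noncomputable def lamMax {n : ℕ} (A : Matrix (Fin n) (Fin n) ℝ) : ℝ :=
  if h : A.IsHermitian then ⨆ i, h.eigenvalues i else 0

/-- The smallest eigenvalue of a (Hermitian) real matrix. -/
noncomputable def lamMin {n : ℕ} (A : Matrix (Fin n) (Fin n) ℝ) : ℝ :=
  if h : A.IsHermitian then ⨅ i, h.eigenvalues i else 0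

open scoped InnerProductSpace

theorem OrthonormalBasis.norm_sq_eq_sum_repr_sq {ι E : Type*} [Fintype ι] [NormedAddCommGroup E]
    [InnerProductSpace ℝ E] (b : OrthonormalBasis ι ℝ E) (y : E) :
    ‖y‖ ^ 2 = ∑ i, b.repr y i ^ 2 := by
  simp_rw [b.repr_apply_apply, b.sum_sq_inner_right]

namespace Matrix.IsHermitian

section Coordinates

variable {ι : Type*} [Fintype ι] [DecidableEq ι] {A : Matrix ι ι ℝ} (hA : A.IsHermitian)

theorem eigenvectorBasis_repr_toEuclideanLin (y : EuclideanSpace ℝ ι) (i : ι) :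
    hA.eigenvectorBasis.repr (toEuclideanLin A y) i =
      hA.eigenvalues i * hA.eigenvectorBasis.repr y i := by
  simp [eigenvectorBasis, eigenvalues, eigenvalues₀, OrthonormalBasis.repr_reindex,
    LinearMap.IsSymmetric.eigenvectorBasis_apply_self_apply]

theorem inner_toEuclideanLin_self_eq_sum (y : EuclideanSpace ℝ ι) :
    ⟪y, toEuclideanLin A y⟫_ℝ = ∑ i, hA.eigenvalues i * hA.eigenvectorBasis.repr y i ^ 2 := by
  rw [← hA.eigenvectorBasis.repr.inner_map_map, PiLp.inner_apply]
  refine Finset.sum_congr rfl fun i _ => ?_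
  rw [hA.eigenvectorBasis_repr_toEuclideanLin]
  simp only [RCLike.inner_apply, conj_trivial]
  ring

theorem inner_toEuclideanLin_eigenvectorBasis (i : ι) :
    ⟪hA.eigenvectorBasis i, toEuclideanLin A (hA.eigenvectorBasis i)⟫_ℝ = hA.eigenvalues i := by
  simp [hA.inner_toEuclideanLin_self_eq_sum]

theorem inner_toEuclideanLin_self_le {c : ℝ} (hc : ∀ i, hA.eigenvalues i ≤ c)
    (y : EuclideanSpace ℝ ι) : ⟪y, toEuclideanLin A y⟫_ℝ ≤ c * ‖y‖ ^ 2 := by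
  rw [hA.inner_toEuclideanLin_self_eq_sum, hA.eigenvectorBasis.norm_sq_eq_sum_repr_sq,
    Finset.mul_sum]
  gcongr with i
  exact hc i

theorem le_inner_toEuclideanLin_self {c : ℝ} (hc : ∀ i, c ≤ hA.eigenvalues i)
    (y : EuclideanSpace ℝ ι) : c * ‖y‖ ^ 2 ≤ ⟪y, toEuclideanLin A y⟫_ℝ := by
  rw [hA.inner_toEuclideanLin_self_eq_sum, hA.eigenvectorBasis.norm_sq_eq_sum_repr_sq,
    Finset.mul_sum]
  gcongr with i
  exact hc i

theorem norm_sub_smul_toEuclideanLin_sq_le {ζ c : ℝ}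
    (hc : ∀ i, (1 - ζ * hA.eigenvalues i) ^ 2 ≤ c) (y : EuclideanSpace ℝ ι) :
    ‖y - ζ • toEuclideanLin A y‖ ^ 2 ≤ c * ‖y‖ ^ 2 := by
  simp_rw [hA.eigenvectorBasis.norm_sq_eq_sum_repr_sq, Finset.mul_sum, map_sub, map_smul,
    PiLp.sub_apply, PiLp.smul_apply, hA.eigenvectorBasis_repr_toEuclideanLin, smul_eq_mul]
  gcongr with i
  calc (hA.eigenvectorBasis.repr y i - ζ * (hA.eigenvalues i * hA.eigenvectorBasis.repr y i)) ^ 2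
      = (1 - ζ * hA.eigenvalues i) ^ 2 * hA.eigenvectorBasis.repr y i ^ 2 := by ring
    _ ≤ c * hA.eigenvectorBasis.repr y i ^ 2 := by gcongr; exact hc i

end Coordinates

variable {n : ℕ} {A B : Matrix (Fin n) (Fin n) ℝ} (hA : A.IsHermitian) (hB : B.IsHermitian)

theorem eigenvalues_le_lamMax (i : Fin n) : hA.eigenvalues i ≤ lamMax A := by
  rw [lamMax, dif_pos hA]
  exact le_ciSup (Set.finite_range _).bddAbove i

theorem lamMin_le_eigenvalues (i : Fin n) : lamMin A ≤ hA.eigenvalues i := by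
  rw [lamMin, dif_pos hA]
  exact ciInf_le (Set.finite_range _).bddBelow i

theorem eigenvalues_add_le_lamMax_add (i : Fin n) :
    (hA.add hB).eigenvalues i ≤ lamMax A + lamMax B := by
  have hv : ‖(hA.add hB).eigenvectorBasis i‖ = 1 := (hA.add hB).eigenvectorBasis.orthonormal.1 i
  have hA_le := hA.inner_toEuclideanLin_self_le hA.eigenvalues_le_lamMax
    ((hA.add hB).eigenvectorBasis i)
  have hB_le := hB.inner_toEuclideanLin_self_le hB.eigenvalues_le_lamMax
    ((hA.add hB).eigenvectorBasis i)
  rw [← (hA.add hB).inner_toEuclideanLin_eigenvectorBasis, map_add, LinearMap.add_apply,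
    inner_add_right]
  rw [hv] at hA_le hB_le
  linarith

theorem lamMin_add_le_eigenvalues_add (i : Fin n) :
    lamMin A + lamMin B ≤ (hA.add hB).eigenvalues i := by
  have hv : ‖(hA.add hB).eigenvectorBasis i‖ = 1 := (hA.add hB).eigenvectorBasis.orthonormal.1 i
  have hA_ge := hA.le_inner_toEuclideanLin_self hA.lamMin_le_eigenvalues
    ((hA.add hB).eigenvectorBasis i)
  have hB_ge := hB.le_inner_toEuclideanLin_self hB.lamMin_le_eigenvalues
    ((hA.add hB).eigenvectorBasis i)
  rw [← (hA.add hB).inner_toEuclideanLin_eigenvectorBasis, map_add, LinearMap.add_apply,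
    inner_add_right]
  rw [hv] at hA_ge hB_ge
  linarith

end Matrix.IsHermitian

theorem Matrix.PosSemidef.lamMin_nonneg {n : ℕ} {A : Matrix (Fin n) (Fin n) ℝ}
    (hA : A.PosSemidef) : 0 ≤ lamMin A := by
  rw [lamMin, dif_pos hA.1]
  exact Real.iInf_nonneg hA.eigenvalues_nonneg

theorem sq_one_sub_mul_le {q m μ : ℝ} (hq : 0 ≤ q) (hm : 0 ≤ m) (hmμ : m ≤ μ) (hqμ : q * μ ≤ 1) :
    (1 - q * μ) ^ 2 ≤ 1 - q * m := by
  nlinarith [mul_nonneg (mul_nonneg hq (hm.trans hmμ)) (sub_nonneg.2 hqμ),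
    mul_le_mul_of_nonneg_left hmμ hq]

theorem one_step_contraction_general (n : ℕ) (S U : Matrix (Fin n) (Fin n) ℝ)
    (hS : S.PosSemidef) (hU : U.PosSemidef)
    (x : EuclideanSpace ℝ (Fin n)) :
    ‖x - (lamMin S / (lamMax U + lamMax S) ^ 2) • (Matrix.toEuclideanLin (S + U) x)‖ ^ 2
      ≤ (1 - lamMin S ^ 2 / (lamMax U + lamMax S) ^ 2) * ‖x‖ ^ 2 := by
  have hm := hS.lamMin_nonneg
  refine (hS.1.add hU.1).norm_sub_smul_toEuclideanLin_sq_le (fun i => ?_) x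
  have hmμ : lamMin S ≤ (hS.1.add hU.1).eigenvalues i := by
    linarith [hS.1.lamMin_add_le_eigenvalues_add hU.1 i, hU.lamMin_nonneg]
  have hμL : (hS.1.add hU.1).eigenvalues i ≤ lamMax U + lamMax S := by
    linarith [hS.1.eigenvalues_add_le_lamMax_add hU.1 i]
  have hqμ : lamMin S / (lamMax U + lamMax S) ^ 2 * (hS.1.add hU.1).eigenvalues i ≤ 1 := by
    rw [div_mul_eq_mul_div]
    exact div_le_one_of_le₀ (by nlinarith) (sq_nonneg _)
  calc _ ≤ 1 - lamMin S / (lamMax U + lamMax S) ^ 2 * lamMin S :=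
        sq_one_sub_mul_le (by positivity) hm hmμ hqμ
    _ = _ := by ring

/-- One-step contraction of the estimation error for the specific adaptation gain
`ζ = λmin(S)/(λmax(U) + λmax(S))²`: with `x⁺ = x − ζ(S + U)x`,
`‖x⁺‖² ≤ (1 − λmin(S)²/(λmax(U) + λmax(S))²)·‖x‖²`. -/
theorem one_step_contraction (n : ℕ) (S U : Matrix (Fin n) (Fin n) ℝ)
    (hS : S.PosSemidef) (hU : U.PosSemidef)
    (hpos : 0 < lamMax U + lamMax S)
    (x : EuclideanSpace ℝ (Fin n)) :
    ‖x - (lamMin S / (lamMax U + lamMax S) ^ 2) • (Matrix.toEuclideanLin (S + U) x)‖ ^ 2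
      ≤ (1 - lamMin S ^ 2 / (lamMax U + lamMax S) ^ 2) * ‖x‖ ^ 2 :=
  one_step_contraction_general n S U hS hU x
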